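/- arXiv:2008.02762 — 2 statements merged into one kernel-verified Lean document; each statement's English description precedes it below -/
import Mathlib

section
/- The only palindromes of odd length in the Ulam set U({0,1}) are the single-letter words 0 and 1. -/
/-- `U` is the Ulam set `U({0,1})` of nonempty binary words: it contains the two
length-one words `0` and `1`, and a word of length at least `2` is in `U` iff it has
exactly one representation as the concatenation of two distinct words of `U`. -/
def IsUlamFamily (U : Set (List Bool)) : Prop :=
  ∀ u : List Bool, u ∈ U ↔
    (u = [false] ∨ u = [true] ∨
      (2 ≤ u.length ∧ ∃! p : List Bool × List Bool,
        p.1 ∈ U ∧ p.2 ∈ U ∧ p.1 ≠ p.2 ∧ p.1 ++ p.2 = u))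

lemma ulam_mem_ne_nil {U : Set (List Bool)} (hU : IsUlamFamily U) {u : List Bool}
    (hu : u ∈ U) : u ≠ [] := by
  rcases (hU u).mp hu with h | h | h
  · subst h; simp
  · subst h; simp
  · intro he; rw [he] at h; simp at h

lemma existsUnique_of_involutive {α : Type*} {P Q : α → Prop} {f : α → α}
    (hf : Function.Involutive f) (h : ∀ p, Q p ↔ P (f p)) :
    (∃! p, P p) → ∃! q, Q q := by
  rintro ⟨p, hp, hp'⟩
  refine ⟨f p, (h (f p)).mpr (by rwa [hf p]), ?_⟩
  intro q hq
  have : f q = p := hp' _ ((h q).mp hq)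
  rw [← this, hf q]

lemma existsUnique_congr_involutive {α : Type*} {P Q : α → Prop} {f : α → α}
    (hf : Function.Involutive f) (h : ∀ p, Q p ↔ P (f p)) :
    (∃! p, P p) ↔ ∃! q, Q q := by
  constructor
  · exact existsUnique_of_involutive hf h
  · refine existsUnique_of_involutive hf ?_
    intro p
    rw [h (f p), hf p]

lemma ulam_family_unique {U V : Set (List Bool)} (hU : IsUlamFamily U)
    (hV : IsUlamFamily V) : U = V := by
  have key : ∀ n (u : List Bool), u.length ≤ n → (u ∈ U ↔ u ∈ V) := by
    intro n
    induction n with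
    | zero =>
      intro u hlen
      have hnil : u = [] := List.length_eq_zero_iff.mp (Nat.le_zero.mp hlen)
      subst hnil
      constructor
      · intro h; exact absurd rfl (ulam_mem_ne_nil hU h)
      · intro h; exact absurd rfl (ulam_mem_ne_nil hV h)
    | succ n ih =>
      intro u hlen
      rw [hU u, hV u]
      refine or_congr Iff.rfl (or_congr Iff.rfl (and_congr Iff.rfl (existsUnique_congr ?_)))
      intro p
      constructor
      · rintro ⟨h1, h2, h3, h4⟩
        have l1 : p.1 ≠ [] := ulam_mem_ne_nil hU h1
        have l2 : p.2 ≠ [] := ulam_mem_ne_nil hU h2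
        have hlen' : p.1.length + p.2.length = u.length := by
          rw [← h4]; simp
        have b1 : p.1.length ≤ n := by
          have := List.length_pos_iff.mpr l2; omega
        have b2 : p.2.length ≤ n := by
          have := List.length_pos_iff.mpr l1; omega
        exact ⟨(ih p.1 b1).mp h1, (ih p.2 b2).mp h2, h3, h4⟩
      · rintro ⟨h1, h2, h3, h4⟩
        have l1 : p.1 ≠ [] := ulam_mem_ne_nil hV h1
        have l2 : p.2 ≠ [] := ulam_mem_ne_nil hV h2
        have hlen' : p.1.length + p.2.length = u.length := by
          rw [← h4]; simp
        have b1 : p.1.length ≤ n := by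
          have := List.length_pos_iff.mpr l2; omega
        have b2 : p.2.length ≤ n := by
          have := List.length_pos_iff.mpr l1; omega
        exact ⟨(ih p.1 b1).mpr h1, (ih p.2 b2).mpr h2, h3, h4⟩
  ext u
  exact key u.length u le_rfl

lemma ulam_reverse_family {U : Set (List Bool)} (hU : IsUlamFamily U) :
    IsUlamFamily {u : List Bool | u.reverse ∈ U} := by
  intro u
  simp only [Set.mem_setOf_eq]
  rw [hU u.reverse]
  refine or_congr ?_ (or_congr ?_ (and_congr ?_ ?_))
  · constructor
    · intro h; have := congrArg List.reverse h; simpa using this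
    · intro h; subst h; rfl
  · constructor
    · intro h; have := congrArg List.reverse h; simpa using this
    · intro h; subst h; rfl
  · simp
  · refine existsUnique_congr_involutive (f := fun q : List Bool × List Bool =>
      (q.2.reverse, q.1.reverse)) ?_ ?_
    · intro q; simp
    · intro q
      constructor
      · rintro ⟨h1, h2, h3, h4⟩
        refine ⟨h2, h1, ?_, ?_⟩
        · simp only [ne_eq, List.reverse_inj]; exact fun h => h3 h.symm
        · simp only [← h4]; simp
      · rintro ⟨h1, h2, h3, h4⟩
        have h4' : q.1 ++ q.2 = u := by
          have := congrArg List.reverse h4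
          simpa using this
        refine ⟨h2, h1, ?_, h4'⟩
        intro h
        exact h3 (by rw [← List.reverse_inj] at h; exact h.symm)

theorem ulam_odd_palindrome (U : Set (List Bool)) (hU : IsUlamFamily U)
    (u : List Bool) (hu : u ∈ U) (hpal : u.reverse = u) (hodd : Odd u.length) :
    u = [false] ∨ u = [true] := by
  rcases (hU u).mp hu with h | h | h
  · exact Or.inl h
  · exact Or.inr h
  · exfalso
    obtain ⟨h2, p, hp, huniq⟩ := h
    -- U is closed under reversal
    have hrev : ∀ w : List Bool, w ∈ U ↔ w.reverse ∈ U := by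
      have hVU : {w : List Bool | w.reverse ∈ U} = U :=
        ulam_family_unique (ulam_reverse_family hU) hU
      intro w
      constructor
      · intro hw; rw [← hVU] at hw; exact hw
      · intro hw
        have : w ∈ {w : List Bool | w.reverse ∈ U} := hw
        rw [hVU] at this; exact this
    obtain ⟨hp1, hp2, hne, hconcat⟩ := hp
    have hq : (p.2.reverse, p.1.reverse).1 ∈ U ∧ (p.2.reverse, p.1.reverse).2 ∈ U ∧
        (p.2.reverse, p.1.reverse).1 ≠ (p.2.reverse, p.1.reverse).2 ∧
        (p.2.reverse, p.1.reverse).1 ++ (p.2.reverse, p.1.reverse).2 = u := by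
      refine ⟨(hrev p.2).mp hp2, (hrev p.1).mp hp1, ?_, ?_⟩
      · simp only [ne_eq, List.reverse_inj]
        exact fun h => hne h.symm
      · show p.2.reverse ++ p.1.reverse = u
        rw [← List.reverse_append, hconcat, hpal]
    have heq := huniq _ hq
    have h1 : p.2.reverse = p.1 := congrArg Prod.fst heq
    have hlen : p.1.length = p.2.length := by
      rw [← h1]; simp
    have htot : p.1.length + p.2.length = u.length := by
      rw [← hconcat]; simp
    obtain ⟨k, hk⟩ := hodd
    omega
end

section
/- Let u be a binary word of length n ≥ 2 with exactly two 1's, at positions i1 < i2 (1-indexed). If u is in the Ulam set U({0,1}), then i2 - i1 ≤ n/2. -/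
open Finset

/-- By Lucas' theorem, `a` and `b` have no binary digit `1` in common
(`oddChoose_iff_mod_two`). -/
def OddChoose (a b : ℕ) : Prop := Odd ((a + b).choose a)

instance : DecidableRel OddChoose := fun _ _ => inferInstanceAs (Decidable (Odd _))

lemma oddChoose_zero_left (b : ℕ) : OddChoose 0 b := by simp [OddChoose]

lemma oddChoose_zero_right (a : ℕ) : OddChoose a 0 := by simp [OddChoose]

lemma oddChoose_iff_xor {a b : ℕ} (h : 1 ≤ a + b) :
    OddChoose a b ↔ Xor (1 ≤ a ∧ OddChoose (a - 1) b) (1 ≤ b ∧ OddChoose a (b - 1)) := by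
  rcases Nat.eq_zero_or_pos a with rfl | ha
  · simpa [Xor, oddChoose_zero_left] using h
  rcases Nat.eq_zero_or_pos b with rfl | hb
  · simpa [Xor, oddChoose_zero_right] using h
  obtain ⟨a, rfl⟩ : ∃ a', a = a' + 1 := ⟨a - 1, by omega⟩
  obtain ⟨b, rfl⟩ : ∃ b', b = b' + 1 := ⟨b - 1, by omega⟩
  have pascal : (a + 1 + (b + 1)).choose (a + 1) =
      (a + (b + 1)).choose a + (a + 1 + b).choose (a + 1) := by
    rw [show a + 1 + (b + 1) = a + (b + 1) + 1 by ring, Nat.choose_succ_succ',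
      show a + (b + 1) = a + 1 + b by ring]
  simp only [OddChoose, Nat.add_sub_cancel, pascal, Nat.odd_add, ← Nat.not_odd_iff_even,
    le_add_iff_nonneg_left, zero_le, true_and, xor_iff_not_iff]
  tauto

lemma oddChoose_iff_mod_two (m n : ℕ) :
    OddChoose m n ↔ (m % 2 = 0 ∨ n % 2 = 0) ∧ OddChoose (m / 2) (n / 2) := by
  have lucas := Choose.choose_modEq_choose_mod_mul_choose_div_nat (p := 2) (n := m + n) (k := m)
  unfold Nat.ModEq at lucas
  rw [OddChoose, OddChoose, Nat.odd_iff, lucas, ← Nat.odd_iff, Nat.odd_mul]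
  have hdiv : (m + n) / 2 = m / 2 + n / 2 + m % 2 * (n % 2) := by
    rcases Nat.mod_two_eq_zero_or_one m with hm | hm <;>
      rcases Nat.mod_two_eq_zero_or_one n with hn | hn <;>
      simp only [hm, hn, mul_zero, mul_one, add_zero] <;> omega
  rcases Nat.mod_two_eq_zero_or_one m with hm | hm <;>
    rcases Nat.mod_two_eq_zero_or_one n with hn | hn <;> simp [hm, hn, Nat.add_mod, hdiv]

lemma oddChoose_two_mul_add {m n x y : ℕ} (hx : x < 2) (hy : y < 2) :
    OddChoose (2 * m + x) (2 * n + y) ↔ (x = 0 ∨ y = 0) ∧ OddChoose m n := by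
  rw [oddChoose_iff_mod_two]
  simp [Nat.mul_add_div, Nat.mod_eq_of_lt hx, Nat.mod_eq_of_lt hy,
    Nat.div_eq_of_lt hx, Nat.div_eq_of_lt hy]

/-- The number of splittings `0^A 1 0^G 1 0^B = 0^A 1 0^c · 0^(G-c) 1 0^B` whose two factors lie
in `U` (`IsUlamFamily.oneWord_mem_iff`). -/
def splitCount (A B G : ℕ) : ℕ := #{c ∈ range (G + 1) | OddChoose A c ∧ OddChoose (G - c) B}

lemma sum_range_two_mul {M : Type*} [AddCommMonoid M] (f : ℕ → M) (n : ℕ) :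
    ∑ c ∈ range (2 * n), f c =
      ∑ i ∈ range n, f (2 * i) + ∑ i ∈ range n, f (2 * i + 1) := by
  induction n with
  | zero => simp
  | succ n ih =>
    rw [mul_add, mul_one, sum_range_succ, sum_range_succ, ih, sum_range_succ, sum_range_succ]
    abel

lemma sum_range_two_mul_add_one {M : Type*} [AddCommMonoid M] (f : ℕ → M) (n : ℕ) :
    ∑ c ∈ range (2 * n + 1), f c =
      ∑ i ∈ range (n + 1), f (2 * i) + ∑ i ∈ range n, f (2 * i + 1) := by
  rw [sum_range_succ, sum_range_two_mul, sum_range_succ]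
  abel

lemma splitCount_two_mul_add_one {A B G a b : ℕ} (ha : a < 2) (hb : b < 2) :
    splitCount (2 * A + a) (2 * B + b) (2 * G + 1) = (2 - a - b) * splitCount A B G := by
  simp only [splitCount, card_filter]
  rw [show 2 * G + 1 + 1 = 2 * (G + 1) by ring, sum_range_two_mul, ← sum_add_distrib, mul_sum]
  refine sum_congr rfl fun i hi => ?_
  have e1 : 2 * G + 1 - 2 * i = 2 * (G - i) + 1 := by have := mem_range.1 hi; omega
  have e2 : 2 * G + 1 - (2 * i + 1) = 2 * (G - i) := by omega
  simp only [e1, e2, oddChoose_iff_mod_two (2 * A + a) (2 * i),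
    oddChoose_iff_mod_two (2 * A + a) (2 * i + 1), oddChoose_iff_mod_two (2 * (G - i) + 1),
    oddChoose_iff_mod_two (2 * (G - i))]
  interval_cases a <;> interval_cases b <;> simp [Nat.add_mod, Nat.add_div, ← two_mul]

lemma splitCount_two_mul_add_two {A B G a b : ℕ} (ha : a < 2) (hb : b < 2) :
    splitCount (2 * A + a) (2 * B + b) (2 * G + 2) =
      splitCount A B (G + 1) + if a = 0 ∧ b = 0 then splitCount A B G else 0 := by
  simp only [splitCount, card_filter]
  rw [show 2 * G + 2 + 1 = 2 * (G + 1) + 1 by ring, sum_range_two_mul_add_one]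
  congr 1
  · refine sum_congr rfl fun i hi => ?_
    have e : 2 * G + 2 - 2 * i = 2 * (G + 1 - i) := by have := mem_range.1 hi; omega
    simp only [e, oddChoose_iff_mod_two (2 * A + a) (2 * i),
      oddChoose_iff_mod_two (2 * (G + 1 - i))]
    simp [Nat.mul_add_div, Nat.div_eq_of_lt ha, Nat.div_eq_of_lt hb]
  · split_ifs with hab
    · obtain ⟨rfl, rfl⟩ := hab
      refine sum_congr rfl fun i hi => ?_
      have e : 2 * G + 2 - (2 * i + 1) = 2 * (G - i) + 1 := by have := mem_range.1 hi; omega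
      simp only [e, oddChoose_iff_mod_two (2 * A + 0) (2 * i + 1),
        oddChoose_iff_mod_two (2 * (G - i) + 1)]
      simp [Nat.add_mod, Nat.add_div]
    · refine sum_eq_zero fun i hi => ?_
      have e : 2 * G + 2 - (2 * i + 1) = 2 * (G - i) + 1 := by have := mem_range.1 hi; omega
      simp only [e, oddChoose_iff_mod_two (2 * A + a) (2 * i + 1),
        oddChoose_iff_mod_two (2 * (G - i) + 1)]
      rw [if_neg]
      rintro ⟨⟨h1, -⟩, h2, -⟩
      omega

lemma exists_eq_two_mul_add (n : ℕ) : ∃ m x, x < 2 ∧ n = 2 * m + x :=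
  ⟨n / 2, n % 2, Nat.mod_lt _ two_pos, (Nat.div_add_mod n 2).symm⟩

lemma splitCount_add_ne_zero {A B : ℕ} (h : OddChoose A B) : splitCount A B (A + B) ≠ 0 := by
  rw [splitCount, ← pos_iff_ne_zero, card_pos]
  exact ⟨B, by simp [h]⟩

lemma splitCount_add_add_one_ne_zero {A B : ℕ} (h : OddChoose A B) :
    splitCount A B (A + B + 1) ≠ 0 := by
  obtain ⟨A, a, ha, rfl⟩ := exists_eq_two_mul_add A
  obtain ⟨B, b, hb, rfl⟩ := exists_eq_two_mul_add B
  obtain ⟨hab, hAB⟩ := (oddChoose_two_mul_add ha hb).1 h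
  obtain rfl | rfl : a = 0 ∨ a = 1 := by omega
  · obtain rfl | rfl : b = 0 ∨ b = 1 := by omega
    · rw [show 2 * A + 0 + (2 * B + 0) + 1 = 2 * (A + B) + 1 by ring,
        splitCount_two_mul_add_one ha hb]
      simpa using splitCount_add_ne_zero hAB
    · rw [show 2 * A + 0 + (2 * B + 1) + 1 = 2 * (A + B) + 2 by ring,
        splitCount_two_mul_add_two ha hb]
      simpa using splitCount_add_add_one_ne_zero hAB
  · obtain rfl : b = 0 := by omega
    rw [show 2 * A + 1 + (2 * B + 0) + 1 = 2 * (A + B) + 2 by ring,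
      splitCount_two_mul_add_two ha hb]
    simpa using splitCount_add_add_one_ne_zero hAB
termination_by A + B

lemma splitCount_add_ne_zero_of_sub_one {A B : ℕ} (hAB : 1 ≤ A + B)
    (h : splitCount A B (A + B - 1) ≠ 0) : splitCount A B (A + B) ≠ 0 := by
  obtain ⟨A, a, ha, rfl⟩ := exists_eq_two_mul_add A
  obtain ⟨B, b, hb, rfl⟩ := exists_eq_two_mul_add B
  rcases (by omega : a + b = 0 ∨ a + b = 1 ∨ a + b = 2) with hab | hab | hab
  · obtain ⟨k, hk⟩ : ∃ k, A + B = k + 1 := ⟨A + B - 1, by omega⟩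
    rw [show 2 * A + a + (2 * B + b) - 1 = 2 * k + 1 by omega, splitCount_two_mul_add_one ha hb,
      show 2 - a - b = 2 by omega] at h
    rw [show 2 * A + a + (2 * B + b) = 2 * k + 2 by omega, splitCount_two_mul_add_two ha hb,
      if_pos (by omega)]
    omega
  · have hAB : splitCount A B (A + B) ≠ 0 := by
      rcases Nat.eq_zero_or_pos (A + B) with h0 | h0
      · obtain ⟨rfl, rfl⟩ : A = 0 ∧ B = 0 := by omega
        exact splitCount_add_ne_zero (oddChoose_zero_left 0)
      · obtain ⟨k, hk⟩ : ∃ k, A + B = k + 1 := ⟨A + B - 1, by omega⟩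
        rwa [show 2 * A + a + (2 * B + b) - 1 = 2 * k + 2 by omega,
          splitCount_two_mul_add_two ha hb, if_neg (by omega), add_zero, ← hk] at h
    rwa [show 2 * A + a + (2 * B + b) = 2 * (A + B) + 1 by omega,
      splitCount_two_mul_add_one ha hb, show 2 - a - b = 1 by omega, one_mul]
  · rw [show 2 * A + a + (2 * B + b) - 1 = 2 * (A + B) + 1 by omega,
      splitCount_two_mul_add_one ha hb, show 2 - a - b = 0 by omega, zero_mul] at h
    exact absurd rfl h

lemma eq_add_of_splitCount_eq_one {A B G : ℕ} (hle : A + B ≤ G) (h : splitCount A B G = 1) :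
    G = A + B ∧ OddChoose A B := by
  induction G using Nat.strong_induction_on generalizing A B with
  | _ G ih =>
  obtain ⟨A, a, ha, rfl⟩ := exists_eq_two_mul_add A
  obtain ⟨B, b, hb, rfl⟩ := exists_eq_two_mul_add B
  rw [oddChoose_two_mul_add ha hb]
  obtain ⟨G, rfl | rfl⟩ := Nat.even_or_odd' G
  · rcases G with _ | G
    · obtain ⟨rfl, rfl, rfl, rfl⟩ : A = 0 ∧ a = 0 ∧ B = 0 ∧ b = 0 := by omega
      simp [oddChoose_zero_left]
    rw [show 2 * (G + 1) = 2 * G + 2 by ring] at ih hle h ⊢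
    rw [splitCount_two_mul_add_two ha hb] at h
    split_ifs at h with hab
    · obtain ⟨rfl, rfl⟩ := hab
      rcases (by omega : splitCount A B (G + 1) = 1 ∧ splitCount A B G = 0 ∨
          splitCount A B (G + 1) = 0 ∧ splitCount A B G = 1) with ⟨h1, -⟩ | ⟨h1, h0⟩
      · obtain ⟨hG, hAB⟩ := ih (G + 1) (by omega) (by omega) h1
        exact ⟨by omega, by omega, hAB⟩
      · -- a count that is nonzero at `G = A + B` or `G = A + B - 1` stays nonzero at `G + 1`
        exfalso
        by_cases hle' : A + B ≤ G
        · obtain ⟨rfl, hAB⟩ := ih G (by omega) hle' h0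
          exact splitCount_add_add_one_ne_zero hAB h1
        · have hG : G + 1 = A + B := by omega
          refine splitCount_add_ne_zero_of_sub_one (by omega) ?_ (hG ▸ h1)
          rw [← hG, Nat.add_sub_cancel]; omega
    · obtain ⟨hG, -⟩ := ih (G + 1) (by omega) (by omega : A + B ≤ G + 1) (by simpa using h)
      omega
  · rw [splitCount_two_mul_add_one ha hb, mul_eq_one] at h
    obtain ⟨hG, hAB⟩ := ih G (by omega) (by omega : A + B ≤ G) h.2
    exact ⟨by omega, by omega, hAB⟩

def oneWord (a b : ℕ) : List Bool := List.replicate a false ++ true :: List.replicate b false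

def twoWord (a g b : ℕ) : List Bool := List.replicate a false ++ true :: oneWord g b

lemma count_true_oneWord (a b : ℕ) : (oneWord a b).count true = 1 := by
  simp [oneWord, List.count_replicate]

lemma count_true_twoWord (a g b : ℕ) : (twoWord a g b).count true = 2 := by
  simp [twoWord, count_true_oneWord, List.count_replicate]

lemma length_oneWord (a b : ℕ) : (oneWord a b).length = a + b + 1 := by
  simp only [oneWord, List.length_append, List.length_replicate, List.length_cons]
  omega

lemma oneWord_ne_false (a b : ℕ) : oneWord a b ≠ [false] :=
  fun h => by simpa [h] using count_true_oneWord a b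

lemma replicate_false_append_true_cons_inj {a a' : ℕ} {l l' : List Bool}
    (h : List.replicate a false ++ true :: l = List.replicate a' false ++ true :: l') :
    a = a' ∧ l = l' := by
  induction a generalizing a' with
  | zero => cases a' <;> simp_all [List.replicate_succ]
  | succ a ih =>
    cases a' with
    | zero => simp [List.replicate_succ] at h
    | succ a' =>
      simp only [List.replicate_succ, List.cons_append, List.cons.injEq, true_and] at h
      exact ⟨congrArg (· + 1) (ih h).1, (ih h).2⟩

lemma oneWord_inj {a b a' b' : ℕ} (h : oneWord a b = oneWord a' b') : a = a' ∧ b = b' := by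
  obtain ⟨rfl, hb⟩ := replicate_false_append_true_cons_inj h
  simpa using congrArg List.length hb

lemma twoWord_inj {a g b a' g' b' : ℕ} (h : twoWord a g b = twoWord a' g' b') :
    a = a' ∧ g = g' ∧ b = b' := by
  obtain ⟨rfl, hgb⟩ := replicate_false_append_true_cons_inj h
  exact ⟨rfl, oneWord_inj hgb⟩

lemma oneWord_append_oneWord (a c d b : ℕ) :
    oneWord a c ++ oneWord d b = twoWord a (c + d) b := by
  simp only [oneWord, twoWord, List.replicate_add, List.append_assoc, List.cons_append]

lemma twoWord_eq_append (a g b : ℕ) :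
    twoWord a g b = (List.replicate a false ++ true :: List.replicate g false) ++
      true :: List.replicate b false := by
  simp [twoWord, oneWord]

lemma exists_eq_oneWord_of_count_true_eq_one {l : List Bool} (h : l.count true = 1) :
    ∃ a b, l = oneWord a b := by
  induction l with
  | nil => simp at h
  | cons x l ih =>
    cases x
    · obtain ⟨a, b, rfl⟩ := ih (by simpa using h)
      exact ⟨a + 1, b, by simp [oneWord, List.replicate_succ]⟩
    · have hl : true ∉ l := List.count_eq_zero.1 (by simpa using h)
      exact ⟨0, l.length, by simpa [oneWord, List.eq_replicate_iff] using hl⟩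

lemma false_cons_eq_iff {a : ℕ} {l m : List Bool} :
    false :: l = List.replicate a false ++ true :: m ↔
      1 ≤ a ∧ l = List.replicate (a - 1) false ++ true :: m := by
  cases a <;> simp [List.replicate_succ]

lemma append_false_eq_iff {b : ℕ} {l m : List Bool} :
    l ++ [false] = m ++ true :: List.replicate b false ↔
      1 ≤ b ∧ l = m ++ true :: List.replicate (b - 1) false := by
  cases b with
  | zero => simp
  | succ b =>
    rw [List.replicate_succ', ← List.cons_append, ← List.append_assoc,
      List.append_cancel_right_eq]
    simp

lemma existsUnique_iff_xor {α : Type*} {P : α → Prop} {x y : α} (hxy : x ≠ y)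
    (h : ∀ z, P z → z = x ∨ z = y) : (∃! z, P z) ↔ Xor (P x) (P y) := by
  constructor
  · rintro ⟨z, hz, huniq⟩
    rcases h z hz with rfl | rfl
    · exact Or.inl ⟨hz, fun hy => hxy (huniq y hy).symm⟩
    · exact Or.inr ⟨hz, fun hx => hxy (huniq x hx)⟩
  · rintro (⟨hx, hny⟩ | ⟨hy, hnx⟩)
    · exact ⟨x, hx, fun z hz => (h z hz).resolve_right fun hzy => hny (hzy ▸ hz)⟩
    · exact ⟨y, hy, fun z hz => (h z hz).resolve_left fun hzx => hnx (hzx ▸ hz)⟩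

namespace IsUlamFamily

variable {U : Set (List Bool)}

lemma false_mem (hU : IsUlamFamily U) : [false] ∈ U := (hU _).2 (Or.inl rfl)

lemma true_mem (hU : IsUlamFamily U) : [true] ∈ U := (hU _).2 (Or.inr (Or.inl rfl))

lemma ne_nil (hU : IsUlamFamily U) {w : List Bool} (hw : w ∈ U) : w ≠ [] := by
  rintro rfl
  simp [hU []] at hw

lemma mem_iff_existsUnique (hU : IsUlamFamily U) {u : List Bool} (hu : 2 ≤ u.length) :
    u ∈ U ↔ ∃! p : List Bool × List Bool, p.1 ∈ U ∧ p.2 ∈ U ∧ p.1 ≠ p.2 ∧ p.1 ++ p.2 = u := by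
  rw [hU u]
  have hf : u ≠ [false] := by rintro rfl; simp at hu
  have ht : u ≠ [true] := by rintro rfl; simp at hu
  simp [hf, ht, hu]

lemma eq_false_of_count_true_eq_zero (hU : IsUlamFamily U) {w : List Bool} (hw : w ∈ U)
    (h : w.count true = 0) : w = [false] := by
  rcases (hU w).1 hw with hf | rfl | ⟨-, ⟨p, q⟩, ⟨hp, hq, hne, hpq⟩, -⟩
  · exact hf
  · simp at h
  · dsimp only at hp hq hne hpq
    have hlen : p.length + q.length = w.length := by rw [← hpq, List.length_append]
    rw [← hpq, List.count_append] at h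
    have hp0 := List.length_pos_iff.2 (hU.ne_nil hp)
    have hq0 := List.length_pos_iff.2 (hU.ne_nil hq)
    exact absurd ((hU.eq_false_of_count_true_eq_zero hp (by omega)).trans
      (hU.eq_false_of_count_true_eq_zero hq (by omega)).symm) hne
termination_by w.length

lemma oneWord_split (hU : IsUlamFamily U) {a b : ℕ} {p q : List Bool} (hp : p ∈ U)
    (hq : q ∈ U) (h : p ++ q = oneWord a b) :
    (p = [false] ∧ 1 ≤ a ∧ q = oneWord (a - 1) b) ∨
      (q = [false] ∧ 1 ≤ b ∧ p = oneWord a (b - 1)) := by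
  have hcount := congrArg (List.count true) h
  rw [List.count_append, count_true_oneWord] at hcount
  rcases Nat.eq_zero_or_pos (p.count true) with hp0 | hp0
  · obtain rfl := hU.eq_false_of_count_true_eq_zero hp hp0
    exact Or.inl ⟨rfl, false_cons_eq_iff.1 h⟩
  · obtain rfl := hU.eq_false_of_count_true_eq_zero hq (by omega)
    exact Or.inr ⟨rfl, append_false_eq_iff.1 h⟩

lemma oneWord_mem_iff_xor (hU : IsUlamFamily U) {a b : ℕ} (hab : 1 ≤ a + b) :
    oneWord a b ∈ U ↔
      Xor (1 ≤ a ∧ oneWord (a - 1) b ∈ U) (1 ≤ b ∧ oneWord a (b - 1) ∈ U) := by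
  have hcons : [false] ++ oneWord (a - 1) b = oneWord a b ↔ 1 ≤ a :=
    false_cons_eq_iff.trans (and_iff_left rfl)
  have hsnoc : oneWord a (b - 1) ++ [false] = oneWord a b ↔ 1 ≤ b :=
    append_false_eq_iff.trans (and_iff_left rfl)
  rw [hU.mem_iff_existsUnique (by rw [length_oneWord]; omega),
    existsUnique_iff_xor (x := ([false], oneWord (a - 1) b)) (y := (oneWord a (b - 1), [false]))]
  · simp only [hU.false_mem, hcons, hsnoc, ne_eq, (oneWord_ne_false _ _).symm, oneWord_ne_false,
      not_false_eq_true, true_and, and_comm]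
  · exact fun h => oneWord_ne_false a (b - 1) (congrArg Prod.fst h).symm
  · rintro ⟨p, q⟩ ⟨hp, hq, -, h⟩
    rcases hU.oneWord_split hp hq h with ⟨rfl, -, rfl⟩ | ⟨rfl, -, rfl⟩ <;> simp

lemma oneWord_mem_iff (hU : IsUlamFamily U) (a b : ℕ) : oneWord a b ∈ U ↔ OddChoose a b := by
  rcases Nat.eq_zero_or_pos (a + b) with h0 | h0
  · obtain ⟨rfl, rfl⟩ : a = 0 ∧ b = 0 := by omega
    simpa [oneWord, oddChoose_zero_left] using hU.true_mem
  rw [hU.oneWord_mem_iff_xor h0, oddChoose_iff_xor h0,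
    and_congr_right fun (_ : 1 ≤ a) => hU.oneWord_mem_iff (a - 1) b,
    and_congr_right fun (_ : 1 ≤ b) => hU.oneWord_mem_iff a (b - 1)]
termination_by a + b

lemma twoWord_split (hU : IsUlamFamily U) {a g b : ℕ} {p q : List Bool} (hp : p ∈ U)
    (hq : q ∈ U) (h : p ++ q = twoWord a g b) :
    (p = [false] ∧ 1 ≤ a ∧ q = twoWord (a - 1) g b) ∨
      (q = [false] ∧ 1 ≤ b ∧ p = twoWord a g (b - 1)) ∨
      ∃ c ≤ g, p = oneWord a c ∧ q = oneWord (g - c) b := by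
  have hcount := congrArg (List.count true) h
  rw [List.count_append, count_true_twoWord] at hcount
  rcases Nat.eq_zero_or_pos (p.count true) with hp0 | hp0
  · obtain rfl := hU.eq_false_of_count_true_eq_zero hp hp0
    exact Or.inl ⟨rfl, false_cons_eq_iff.1 h⟩
  rcases Nat.eq_zero_or_pos (q.count true) with hq0 | hq0
  · obtain rfl := hU.eq_false_of_count_true_eq_zero hq hq0
    rw [twoWord_eq_append] at h
    refine Or.inr (Or.inl ⟨rfl, ?_⟩)
    rw [twoWord_eq_append]
    exact append_false_eq_iff.1 h
  obtain ⟨a', c, rfl⟩ := exists_eq_oneWord_of_count_true_eq_one (l := p) (by omega)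
  obtain ⟨d, b', rfl⟩ := exists_eq_oneWord_of_count_true_eq_one (l := q) (by omega)
  rw [oneWord_append_oneWord] at h
  obtain ⟨rfl, rfl, rfl⟩ := twoWord_inj h
  exact Or.inr (Or.inr ⟨c, by omega, rfl, by rw [Nat.add_sub_cancel_left]⟩)

theorem twoWord_not_mem (hU : IsUlamFamily U) {a g b : ℕ} (h : a + b < g) :
    twoWord a g b ∉ U := by
  intro hmem
  have hlen : 2 ≤ (twoWord a g b).length := by
    simp only [twoWord, oneWord, List.length_append, List.length_replicate, List.length_cons]
    omega
  obtain ⟨⟨p, q⟩, ⟨hp, hq, -, hpq⟩, huniq⟩ := (hU.mem_iff_existsUnique hlen).1 hmem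
  rcases hU.twoWord_split hp hq hpq with ⟨-, ha, rfl⟩ | ⟨-, hb, rfl⟩ | ⟨c, hc, rfl, rfl⟩
  · exact hU.twoWord_not_mem (a := a - 1) (by omega) hq
  · exact hU.twoWord_not_mem (b := b - 1) (by omega) hp
  refine absurd (eq_add_of_splitCount_eq_one h.le (card_eq_one.2 ⟨c, ?_⟩)).1 h.ne'
  ext c'
  simp only [mem_filter, mem_range, mem_singleton]
  constructor
  · rintro ⟨hc', hac, hcb⟩
    have hne : oneWord a c' ≠ oneWord (g - c') b := fun heq => by
      obtain ⟨h1, h2⟩ := oneWord_inj heq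
      omega
    have hsplit := huniq (oneWord a c', oneWord (g - c') b)
      ⟨(hU.oneWord_mem_iff _ _).2 hac, (hU.oneWord_mem_iff _ _).2 hcb, hne,
        by rw [oneWord_append_oneWord, Nat.add_sub_cancel' (by omega)]⟩
    exact (oneWord_inj (congrArg Prod.fst hsplit)).2
  · rintro rfl
    exact ⟨by omega, (hU.oneWord_mem_iff _ _).1 hp, (hU.oneWord_mem_iff _ _).1 hq⟩
termination_by a + b

end IsUlamFamily

theorem ulam_two_ones_gap_general (U : Set (List Bool)) (hU : IsUlamFamily U)
    (n i1 i2 : ℕ) (hi1 : 1 ≤ i1) (h2n : i2 ≤ n)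
    (u : List Bool)
    (hu : u = List.replicate (i1 - 1) false ++
        true :: (List.replicate (i2 - i1 - 1) false ++
          true :: List.replicate (n - i2) false))
    (hmem : u ∈ U) :
    2 * (i2 - i1) ≤ n := by
  by_contra hgap
  subst hu
  exact hU.twoWord_not_mem (a := i1 - 1) (g := i2 - i1 - 1) (b := n - i2) (by omega) hmem

theorem ulam_two_ones_gap (U : Set (List Bool)) (hU : IsUlamFamily U)
    (n i1 i2 : ℕ) (hi1 : 1 ≤ i1) (h12 : i1 < i2) (h2n : i2 ≤ n) (hn : 2 ≤ n)
    (u : List Bool)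
    (hu : u = List.replicate (i1 - 1) false ++
        true :: (List.replicate (i2 - i1 - 1) false ++
          true :: List.replicate (n - i2) false))
    (hmem : u ∈ U) :
    2 * (i2 - i1) ≤ n :=
  ulam_two_ones_gap_general U hU n i1 i2 hi1 h2n u hu hmem
end
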